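/- Radial derivative identity: for every α > 0, the function r ↦ 1 − ∫₀^∞ exp(−s − αr²/(4s)) ds is differentiable on (0,∞) with derivative at each r > 0 equal to (α/2) r ∫₀^∞ s^{-1} exp(−s − αr²/(4s)) ds = 2πα r B₁(√α · r). -/

import Mathlib

open MeasureTheory Real

/-- The radial Bessel kernel with parameter `1`:
`B₁(ρ) = (1/(4π)) ∫₀^∞ t⁻¹ exp(−ρ²/(4t) − t) dt`. -/
noncomputable def besselRadialOne (ρ : ℝ) : ℝ :=
  (1 / (4 * π)) * ∫ t in Set.Ioi (0 : ℝ), t⁻¹ * Real.exp (-ρ ^ 2 / (4 * t) - t)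

/-! Differentiate under the integral sign: the `ρ`-derivative of the integrand is
`-(αρ/2) s⁻¹ exp(-s - αρ²/(4s))`, and since `s⁻¹ exp(-c/s) ≤ 1/c` it is dominated by
`(2/|ρ|) e^{-s}`, uniformly for `ρ` away from `0`. The value `2παr B₁(√α r)` is then
`B₁`'s defining integral, as `(√α r)² = αr²`. -/

lemma inv_mul_exp_neg_div_le_inv {c s : ℝ} (hc : 0 < c) (hs : 0 < s) :
    s⁻¹ * exp (-(c / s)) ≤ c⁻¹ := by
  have hcs : c / s ≤ exp (c / s) := (add_one_le_exp _).trans' (by linarith)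
  calc s⁻¹ * exp (-(c / s)) = c⁻¹ * ((c / s) / exp (c / s)) := by
        rw [exp_neg]; field_simp
    _ ≤ c⁻¹ * 1 := by
        gcongr
        exact div_le_one_of_le₀ hcs (by positivity)
    _ = c⁻¹ := mul_one _

lemma integrableOn_exp_neg_sub_mul_sq_div {α : ℝ} (hα : 0 ≤ α) (ρ : ℝ) :
    IntegrableOn (fun s => exp (-s - α * ρ ^ 2 / (4 * s))) (Set.Ioi 0) := by
  refine (integrableOn_exp_neg_Ioi 0).mono' (by fun_prop) ?_
  filter_upwards [ae_restrict_mem measurableSet_Ioi] with s (hs : 0 < s)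
  rw [norm_of_nonneg (exp_pos _).le, exp_le_exp]
  have : 0 ≤ α * ρ ^ 2 / (4 * s) := by positivity
  linarith

lemma hasDerivAt_exp_neg_sub_mul_sq_div (α : ℝ) {s : ℝ} (hs : s ≠ 0) (ρ : ℝ) :
    HasDerivAt (fun ρ => exp (-s - α * ρ ^ 2 / (4 * s)))
      (-(α * ρ / 2) * (s⁻¹ * exp (-s - α * ρ ^ 2 / (4 * s)))) ρ := by
  have hinner : HasDerivAt (fun ρ : ℝ => -s - α * ρ ^ 2 / (4 * s))
      (-(α * (2 * ρ) / (4 * s))) ρ := by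
    simpa using (((hasDerivAt_pow 2 ρ).const_mul α).div_const (4 * s)).const_sub (-s)
  convert hinner.exp using 1
  field_simp
  ring

lemma norm_mul_inv_mul_exp_neg_sub_mul_sq_div_le {α s ρ : ℝ} (hα : 0 < α) (hs : 0 < s)
    (hρ : ρ ≠ 0) :
    ‖-(α * ρ / 2) * (s⁻¹ * exp (-s - α * ρ ^ 2 / (4 * s)))‖ ≤ 2 / |ρ| * exp (-s) := by
  have hc : 0 < α * ρ ^ 2 / 4 := by positivity
  have hsplit : exp (-s - α * ρ ^ 2 / (4 * s)) = exp (-s) * exp (-(α * ρ ^ 2 / 4 / s)) := by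
    rw [← exp_add]; ring_nf
  calc ‖-(α * ρ / 2) * (s⁻¹ * exp (-s - α * ρ ^ 2 / (4 * s)))‖
      = α * |ρ| / 2 * (s⁻¹ * exp (-(α * ρ ^ 2 / 4 / s))) * exp (-s) := by
        rw [norm_mul, norm_neg, norm_of_nonneg (r := s⁻¹ * _) (by positivity), hsplit,
          Real.norm_eq_abs, abs_div, abs_mul, abs_of_pos hα, abs_two]
        ring
    _ ≤ α * |ρ| / 2 * (α * ρ ^ 2 / 4)⁻¹ * exp (-s) := by
        gcongr
        exact inv_mul_exp_neg_div_le_inv hc hs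
    _ = 2 / |ρ| * exp (-s) := by
        rw [← sq_abs ρ]
        have : 0 < |ρ| := abs_pos.2 hρ
        field_simp
        norm_num

theorem hasDerivAt_integral_exp_neg_sub_mul_sq_div {α r : ℝ} (hα : 0 < α) (hr : r ≠ 0) :
    HasDerivAt (fun ρ => ∫ s in Set.Ioi (0 : ℝ), exp (-s - α * ρ ^ 2 / (4 * s)))
      (-(α * r / 2) * ∫ s in Set.Ioi (0 : ℝ), s⁻¹ * exp (-s - α * r ^ 2 / (4 * s))) r := by
  have hr' : 0 < |r| := abs_pos.2 hr
  have hball : ∀ ρ ∈ Metric.ball r (|r| / 2), |r| / 2 < |ρ| := fun ρ hρ => by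
    have := abs_sub_abs_le_abs_sub r ρ
    rw [Metric.mem_ball, Real.dist_eq, abs_sub_comm] at hρ
    linarith
  have hbound : ∀ᵐ s ∂volume.restrict (Set.Ioi 0), ∀ ρ ∈ Metric.ball r (|r| / 2),
      ‖-(α * ρ / 2) * (s⁻¹ * exp (-s - α * ρ ^ 2 / (4 * s)))‖ ≤ 4 / |r| * exp (-s) := by
    filter_upwards [ae_restrict_mem measurableSet_Ioi] with s (hs : 0 < s) ρ hρ
    have hρ := hball ρ hρ
    have hρ' : 0 < |ρ| := by linarith
    refine (norm_mul_inv_mul_exp_neg_sub_mul_sq_div_le hα hs (abs_pos.1 hρ')).trans ?_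
    refine mul_le_mul_of_nonneg_right ?_ (exp_pos _).le
    rw [div_le_div_iff₀ hρ' hr']
    linarith
  have hderiv : ∀ᵐ s ∂volume.restrict (Set.Ioi 0), ∀ ρ ∈ Metric.ball r (|r| / 2),
      HasDerivAt (fun ρ => exp (-s - α * ρ ^ 2 / (4 * s)))
        (-(α * ρ / 2) * (s⁻¹ * exp (-s - α * ρ ^ 2 / (4 * s)))) ρ := by
    filter_upwards [ae_restrict_mem measurableSet_Ioi] with s (hs : 0 < s) ρ _
    exact hasDerivAt_exp_neg_sub_mul_sq_div α hs.ne' ρ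
  have key := hasDerivAt_integral_of_dominated_loc_of_deriv_le
    (F := fun ρ s => exp (-s - α * ρ ^ 2 / (4 * s)))
    (Metric.ball_mem_nhds r (half_pos hr')) (.of_forall fun _ => by fun_prop)
    (integrableOn_exp_neg_sub_mul_sq_div hα.le r) (by fun_prop) hbound
    ((integrableOn_exp_neg_Ioi 0).const_mul _) hderiv
  rw [← integral_const_mul]
  exact key.2

lemma integral_inv_mul_exp_neg_sub_mul_sq_div_eq_besselRadialOne {α : ℝ} (hα : 0 ≤ α)
    (r : ℝ) :
    ∫ s in Set.Ioi (0 : ℝ), s⁻¹ * exp (-s - α * r ^ 2 / (4 * s)) =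
      4 * π * besselRadialOne (√α * r) := by
  have hexp : ∀ s : ℝ, -(√α * r) ^ 2 / (4 * s) - s = -s - α * r ^ 2 / (4 * s) := fun s => by
    rw [mul_pow, sq_sqrt hα]; ring
  simp only [besselRadialOne, hexp]
  rw [← mul_assoc, mul_one_div_cancel (by positivity), one_mul]

/-- Radial derivative identity for `r ↦ 1 − g_α(r)`. -/
theorem radial_derivative_identity (α : ℝ) (hα : 0 < α) (r : ℝ) (hr : 0 < r) :
    HasDerivAt (fun ρ : ℝ => 1 - ∫ s in Set.Ioi (0 : ℝ), Real.exp (-s - α * ρ ^ 2 / (4 * s)))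
      ((α / 2) * r *
        ∫ s in Set.Ioi (0 : ℝ), s⁻¹ * Real.exp (-s - α * r ^ 2 / (4 * s))) r ∧
    (α / 2) * r * (∫ s in Set.Ioi (0 : ℝ), s⁻¹ * Real.exp (-s - α * r ^ 2 / (4 * s))) =
      2 * π * α * r * besselRadialOne (Real.sqrt α * r) := by
  refine ⟨?_, ?_⟩
  · exact ((hasDerivAt_integral_exp_neg_sub_mul_sq_div hα hr.ne').const_sub 1).congr_deriv
      (by ring)
  · rw [integral_inv_mul_exp_neg_sub_mul_sq_div_eq_besselRadialOne hα.le]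
    ring
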